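/- Let (A, ⋆, α) be a hom-associative magma with β : A → A satisfying α ∘ β = id. Then for all a, b, x, y, z ∈ A: (b ⋆ (x ⋆ β(y ⋆ z))) ⋆ a = (b ⋆ (β(x ⋆ y) ⋆ z)) ⋆ a. -/

import Mathlib

/-! Since `α ∘ β = id`, every element is `α` of something, so hom-associativity can be applied
with any element in the `α` slot. Pushing the outer factor `a` inside on both sides, each side
becomes `(b ⋆ (x ⋆ y)) ⋆ α (z ⋆ β (β a))`. -/

section HomAssociative

variable {A : Type*} (star : A → A → A) (α β : A → A)

theorem star_star_eq (hassoc : ∀ x y z, star (α x) (star y z) = star (star x y) (α z))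
    (hβ : ∀ a, α (β a) = a) (p u w : A) :
    star (star p u) w = star (α p) (star u (β w)) := by
  rw [hassoc, hβ]

theorem star_star_β_eq (hassoc : ∀ x y z, star (α x) (star y z) = star (star x y) (α z))
    (hβ : ∀ a, α (β a) = a) (p u w : A) :
    star p (star u (β w)) = star (star (β p) u) w := by
  rw [star_star_eq star α β hassoc hβ, hβ]

theorem star_β_star_α (hassoc : ∀ x y z, star (α x) (star y z) = star (star x y) (α z))
    (hβ : ∀ a, α (β a) = a) (p u w : A) :
    star (star (β p) u) (α w) = star p (star u w) := by
  rw [← hassoc, hβ]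

theorem star_star_star_eq (hassoc : ∀ x y z, star (α x) (star y z) = star (star x y) (α z))
    (hβ : ∀ a, α (β a) = a) (c u v a : A) :
    star (star c (star u v)) a = star (star c (α u)) (α (star v (β (β a)))) := by
  rw [star_star_eq star α β hassoc hβ, star_star_eq star α β hassoc hβ u, hassoc]

end HomAssociative

theorem homAssoc_ass4 {A : Type*} (star : A → A → A) (α β : A → A)
    (hassoc : ∀ x y z, star (α x) (star y z) = star (star x y) (α z))
    (hβ : ∀ a, α (β a) = a) :
    ∀ a b x y z, star (star b (star x (β (star y z)))) a =
      star (star b (star (β (star x y)) z)) a := by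
  intro a b x y z
  calc star (star b (star x (β (star y z)))) a
      = star (star (star (β b) x) (star y z)) a := by
        rw [star_star_β_eq star α β hassoc hβ]
    _ = star (star b (star x y)) (α (star z (β (β a)))) := by
        rw [star_star_star_eq star α β hassoc hβ, star_β_star_α star α β hassoc hβ]
    _ = star (star b (star (β (star x y)) z)) a := by
        rw [star_star_star_eq star α β hassoc hβ b (β (star x y)), hβ]
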